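/- Assume all corner concentration values of all cells are strictly positive, all values D₂₂^∓ lie in [0, D₂₂^M], all values |D₂₁^∓| are at most D₂₁^M, α̃ ≥ (Δx/(2Δy))·D₂₂^M + √3·D₂₁^M, and D₂₂^M·Λ₂ + 2(α̃ + D₂₁^M)·λ < Φ_m/12, where Φ_m is the minimum of Φ over all mesh corners. Then the y-diffusion part H^d_y := r̄_{ij}/6 − λ₂·∑_{β=1,2} w_β[ {D₂₁c_x + D₂₂c_y}_{i,j−1/2,β} + (α̃/Δx)·[c]_{i,j−1/2,β} − {D₂₁c_x + D₂₂c_y}_{i,j+1/2,β} − (α̃/Δx)·[c]_{i,j+1/2,β} ] is strictly positive for every interior cell (2 ≤ i ≤ N_x−1, 2 ≤ j ≤ N_y−1). -/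

import Mathlib

noncomputable section

namespace DG2D

/-- Gauss constant `μ₁ = (3+√3)/6`. -/
def mu1 : ℝ := (3 + Real.sqrt 3) / 6

/-- Gauss constant `μ₂ = (3-√3)/6`. -/
def mu2 : ℝ := (3 - Real.sqrt 3) / 6

/-- Value at the Gauss point `β` of an edge, from the two endpoint (corner) values:
`β = 1` gives `μ₁·a + μ₂·b`, `β = 2` gives `μ₂·a + μ₁·b`. -/
def ga (β : Fin 2) (a b : ℝ) : ℝ := if β = 0 then mu1 * a + mu2 * b else mu2 * a + mu1 * b

/-- Cell average `r̄_{ij} = (1/4)·∑ cΦ` over the four corners of `K_{ij}`.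
`Φ i j` denotes the corner value `Φ_{i+1/2,j+1/2}`; `c00 i j`, `c10 i j`, `c01 i j`,
`c11 i j` denote the corner values of `c` in cell `K_{ij}` at the corners
`(i-1/2,j-1/2)`, `(i+1/2,j-1/2)`, `(i-1/2,j+1/2)`, `(i+1/2,j+1/2)` respectively. -/
def rbar (Φ c00 c10 c01 c11 : ℕ → ℕ → ℝ) (i j : ℕ) : ℝ :=
  (c00 i j * Φ (i - 1) (j - 1) + c10 i j * Φ i (j - 1)
    + c01 i j * Φ (i - 1) j + c11 i j * Φ i j) / 4

/-- Trace `c⁻` (from `K_{ij}`) at Gauss point `β` of the vertical edge `x_{i+1/2}`, row `j`. -/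
def cmV (c10 c11 : ℕ → ℕ → ℝ) (i j : ℕ) (β : Fin 2) : ℝ := ga β (c10 i j) (c11 i j)

/-- Trace `c⁺` (from `K_{i+1,j}`) at Gauss point `β` of the vertical edge `x_{i+1/2}`, row `j`. -/
def cpV (c00 c01 : ℕ → ℕ → ℝ) (i j : ℕ) (β : Fin 2) : ℝ := ga β (c00 (i + 1) j) (c01 (i + 1) j)

/-- Trace `c⁻` (from `K_{ij}`) at Gauss point `β` of the horizontal edge `y_{j+1/2}`, column `i`. -/
def cmH (c01 c11 : ℕ → ℕ → ℝ) (i j : ℕ) (β : Fin 2) : ℝ := ga β (c01 i j) (c11 i j)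

/-- Trace `c⁺` (from `K_{i,j+1}`) at Gauss point `β` of the horizontal edge `y_{j+1/2}`. -/
def cpH (c00 c10 : ℕ → ℕ → ℝ) (i j : ℕ) (β : Fin 2) : ℝ := ga β (c00 i (j + 1)) (c10 i (j + 1))

/-- Jump `[c] = c⁺ - c⁻` at a vertical-edge Gauss point. -/
def jumpV (c00 c10 c01 c11 : ℕ → ℕ → ℝ) (i j : ℕ) (β : Fin 2) : ℝ :=
  cpV c00 c01 i j β - cmV c10 c11 i j β

/-- Jump `[c] = c⁺ - c⁻` at a horizontal-edge Gauss point. -/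
def jumpH (c00 c10 c01 c11 : ℕ → ℕ → ℝ) (i j : ℕ) (β : Fin 2) : ℝ :=
  cpH c00 c10 i j β - cmH c01 c11 i j β

/-- Convective flux `û₁c = u₁⁺·c⁺ - α·[c]` at vertical-edge Gauss points. -/
def uc1 (u1 : ℕ → ℕ → Fin 2 → ℝ) (c00 c10 c01 c11 : ℕ → ℕ → ℝ) (α : ℝ)
    (i j : ℕ) (β : Fin 2) : ℝ :=
  u1 i j β * cpV c00 c01 i j β - α * (cpV c00 c01 i j β - cmV c10 c11 i j β)

/-- Convective flux `û₂c = u₂⁺·c⁺ - α·[c]` at horizontal-edge Gauss points. -/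
def uc2 (u2 : ℕ → ℕ → Fin 2 → ℝ) (c00 c10 c01 c11 : ℕ → ℕ → ℝ) (α : ℝ)
    (i j : ℕ) (β : Fin 2) : ℝ :=
  u2 i j β * cpH c00 c10 i j β - α * (cpH c00 c10 i j β - cmH c01 c11 i j β)

/-- Convection part `H^c_{ij}`. -/
def Hc (u1 u2 : ℕ → ℕ → Fin 2 → ℝ) (Φ c00 c10 c01 c11 : ℕ → ℕ → ℝ) (α Δx Δy Δt : ℝ)
    (i j : ℕ) : ℝ :=
  rbar Φ c00 c10 c01 c11 i j / 3
    + (Δt / Δx) * ∑ β : Fin 2, (1 / 2 : ℝ) *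
        (uc1 u1 c00 c10 c01 c11 α (i - 1) j β - uc1 u1 c00 c10 c01 c11 α i j β)
    + (Δt / Δy) * ∑ β : Fin 2, (1 / 2 : ℝ) *
        (uc2 u2 c00 c10 c01 c11 α i (j - 1) β - uc2 u2 c00 c10 c01 c11 α i j β)

/-- Derivative trace `(c_x)⁻` at a vertical-edge Gauss point:
`(c_x)⁻_{i+1/2,β} = (c⁻_{i+1/2,β} - c⁺_{i-1/2,β})/Δx`. -/
def cxmV (c00 c10 c01 c11 : ℕ → ℕ → ℝ) (Δx : ℝ) (i j : ℕ) (β : Fin 2) : ℝ :=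
  (cmV c10 c11 i j β - cpV c00 c01 (i - 1) j β) / Δx

/-- Derivative trace `(c_x)⁺` at a vertical-edge Gauss point:
`(c_x)⁺_{i+1/2,β} = (c⁻_{i+3/2,β} - c⁺_{i+1/2,β})/Δx`. -/
def cxpV (c00 c10 c01 c11 : ℕ → ℕ → ℝ) (Δx : ℝ) (i j : ℕ) (β : Fin 2) : ℝ :=
  (cmV c10 c11 (i + 1) j β - cpV c00 c01 i j β) / Δx

/-- Tangential derivative trace `(c_y)⁻` on a vertical edge:
`(√3/Δy)·(c⁻_{i+1/2,2} - c⁻_{i+1/2,1})` (the same for both Gauss points). -/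
def cymV (c10 c11 : ℕ → ℕ → ℝ) (Δy : ℝ) (i j : ℕ) : ℝ :=
  (Real.sqrt 3 / Δy) * (cmV c10 c11 i j 1 - cmV c10 c11 i j 0)

/-- Tangential derivative trace `(c_y)⁺` on a vertical edge. -/
def cypV (c00 c01 : ℕ → ℕ → ℝ) (Δy : ℝ) (i j : ℕ) : ℝ :=
  (Real.sqrt 3 / Δy) * (cpV c00 c01 i j 1 - cpV c00 c01 i j 0)

/-- Average `{D₁₁c_x + D₁₂c_y}` at a vertical-edge Gauss point. -/
def GxV (D11m D11p D12m D12p : ℕ → ℕ → Fin 2 → ℝ) (c00 c10 c01 c11 : ℕ → ℕ → ℝ)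
    (Δx Δy : ℝ) (i j : ℕ) (β : Fin 2) : ℝ :=
  (D11m i j β * cxmV c00 c10 c01 c11 Δx i j β + D12m i j β * cymV c10 c11 Δy i j
    + D11p i j β * cxpV c00 c10 c01 c11 Δx i j β + D12p i j β * cypV c00 c01 Δy i j) / 2

/-- x-diffusion part `H^d_x`. -/
def Hdx (D11m D11p D12m D12p : ℕ → ℕ → Fin 2 → ℝ) (Φ c00 c10 c01 c11 : ℕ → ℕ → ℝ)
    (αt Δx Δy Δt : ℝ) (i j : ℕ) : ℝ :=
  rbar Φ c00 c10 c01 c11 i j / 6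
    - (Δt / Δx) * ∑ β : Fin 2, (1 / 2 : ℝ) *
        ((GxV D11m D11p D12m D12p c00 c10 c01 c11 Δx Δy (i - 1) j β
            + (αt / Δy) * jumpV c00 c10 c01 c11 (i - 1) j β)
          - (GxV D11m D11p D12m D12p c00 c10 c01 c11 Δx Δy i j β
            + (αt / Δy) * jumpV c00 c10 c01 c11 i j β))

/-- Derivative trace `(c_y)⁻` at a horizontal-edge Gauss point. -/
def cymH (c00 c10 c01 c11 : ℕ → ℕ → ℝ) (Δy : ℝ) (i j : ℕ) (β : Fin 2) : ℝ :=
  (cmH c01 c11 i j β - cpH c00 c10 i (j - 1) β) / Δy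

/-- Derivative trace `(c_y)⁺` at a horizontal-edge Gauss point. -/
def cypH (c00 c10 c01 c11 : ℕ → ℕ → ℝ) (Δy : ℝ) (i j : ℕ) (β : Fin 2) : ℝ :=
  (cmH c01 c11 i (j + 1) β - cpH c00 c10 i j β) / Δy

/-- Tangential derivative trace `(c_x)⁻` on a horizontal edge. -/
def cxmH (c01 c11 : ℕ → ℕ → ℝ) (Δx : ℝ) (i j : ℕ) : ℝ :=
  (Real.sqrt 3 / Δx) * (cmH c01 c11 i j 1 - cmH c01 c11 i j 0)

/-- Tangential derivative trace `(c_x)⁺` on a horizontal edge. -/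
def cxpH (c00 c10 : ℕ → ℕ → ℝ) (Δx : ℝ) (i j : ℕ) : ℝ :=
  (Real.sqrt 3 / Δx) * (cpH c00 c10 i j 1 - cpH c00 c10 i j 0)

/-- Average `{D₂₁c_x + D₂₂c_y}` at a horizontal-edge Gauss point. -/
def GyH (D21m D21p D22m D22p : ℕ → ℕ → Fin 2 → ℝ) (c00 c10 c01 c11 : ℕ → ℕ → ℝ)
    (Δx Δy : ℝ) (i j : ℕ) (β : Fin 2) : ℝ :=
  (D21m i j β * cxmH c01 c11 Δx i j + D22m i j β * cymH c00 c10 c01 c11 Δy i j β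
    + D21p i j β * cxpH c00 c10 Δx i j + D22p i j β * cypH c00 c10 c01 c11 Δy i j β) / 2

/-- y-diffusion part `H^d_y`. -/
def Hdy (D21m D21p D22m D22p : ℕ → ℕ → Fin 2 → ℝ) (Φ c00 c10 c01 c11 : ℕ → ℕ → ℝ)
    (αt Δx Δy Δt : ℝ) (i j : ℕ) : ℝ :=
  rbar Φ c00 c10 c01 c11 i j / 6
    - (Δt / Δy) * ∑ β : Fin 2, (1 / 2 : ℝ) *
        ((GyH D21m D21p D22m D22p c00 c10 c01 c11 Δx Δy i (j - 1) β
            + (αt / Δx) * jumpH c00 c10 c01 c11 i (j - 1) β)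
          - (GyH D21m D21p D22m D22p c00 c10 c01 c11 Δx Δy i j β
            + (αt / Δx) * jumpH c00 c10 c01 c11 i j β))

/-- Value of the bilinear function `c` at the interior Gauss point `(β,γ)` of cell `K_{ij}`. -/
def cGP (c00 c10 c01 c11 : ℕ → ℕ → ℝ) (i j : ℕ) (β γ : Fin 2) : ℝ :=
  ga β (ga γ (c00 i j) (c01 i j)) (ga γ (c10 i j) (c11 i j))

/-- Value of the bilinear function `r = cΦ` at the interior Gauss point `(β,γ)` of `K_{ij}`. -/
def rGP (Φ c00 c10 c01 c11 : ℕ → ℕ → ℝ) (i j : ℕ) (β γ : Fin 2) : ℝ :=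
  ga β (ga γ (c00 i j * Φ (i - 1) (j - 1)) (c01 i j * Φ (i - 1) j))
    (ga γ (c10 i j * Φ i (j - 1)) (c11 i j * Φ i j))

/-- Value of the bilinear interpolant of `Φ` at the interior Gauss point `(β,γ)` of `K_{ij}`. -/
def phiGP (Φ : ℕ → ℕ → ℝ) (i j : ℕ) (β γ : Fin 2) : ℝ :=
  ga β (ga γ (Φ (i - 1) (j - 1)) (Φ (i - 1) j)) (ga γ (Φ i (j - 1)) (Φ i j))

/-- Source part `H^s_{ij}`. -/
def Hs (Φ c00 c10 c01 c11 : ℕ → ℕ → ℝ) (q ct P : ℕ → ℕ → Fin 2 → Fin 2 → ℝ)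
    (z1 Δt : ℝ) (i j : ℕ) : ℝ :=
  rbar Φ c00 c10 c01 c11 i j / 3
    + Δt * ∑ β : Fin 2, ∑ γ : Fin 2, (1 / 2 : ℝ) * (1 / 2 : ℝ) *
        (ct i j β γ * q i j β γ - z1 * rGP Φ c00 c10 c01 c11 i j β γ * P i j β γ)

/-- The Euler-forward cell-average update `r̄^{new}_{ij} = H^c + H^d_x + H^d_y + H^s`. -/
def rbarnew (u1 u2 D11m D11p D12m D12p D21m D21p D22m D22p : ℕ → ℕ → Fin 2 → ℝ)
    (Φ c00 c10 c01 c11 : ℕ → ℕ → ℝ) (q ct P : ℕ → ℕ → Fin 2 → Fin 2 → ℝ)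
    (α αt z1 Δx Δy Δt : ℝ) (i j : ℕ) : ℝ :=
  Hc u1 u2 Φ c00 c10 c01 c11 α Δx Δy Δt i j
    + Hdx D11m D11p D12m D12p Φ c00 c10 c01 c11 αt Δx Δy Δt i j
    + Hdy D21m D21p D22m D22p Φ c00 c10 c01 c11 αt Δx Δy Δt i j
    + Hs Φ c00 c10 c01 c11 q ct P z1 Δt i j

/-!
Multiply `H^d_y` by `4ΔxΔy²`. Because the tangential derivatives are exact differences of
endpoint values along an edge (`√3 (ga 1 a b - ga 0 a b) = b - a`), the Gauss-averaged flux through a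
horizontal edge is an explicit linear form in the corner values of the two adjacent cells,
and `4ΔxΔy² H^d_y` splits into a part depending on the lower neighbour, one depending on the
upper neighbour, and one depending on `K_{ij}` itself. In the neighbour parts every corner
value has a nonnegative coefficient once the penalty dominates the diffusion
(`Δx D₂₂^M + 2Δy D₂₁^M ≤ 2α̃Δy`); in the own-cell part the coefficient of every corner value
is positive by the CFL condition. All corner values being positive, `H^d_y > 0`.
-/

lemma mu1_nonneg : 0 ≤ mu1 := by unfold mu1; positivity

lemma mu2_nonneg : 0 ≤ mu2 := by
  have h := Real.sq_sqrt (show (0 : ℝ) ≤ 3 by norm_num)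
  unfold mu2
  nlinarith [Real.sqrt_nonneg 3]

lemma mu1_add_mu2 : mu1 + mu2 = 1 := by unfold mu1 mu2; ring

lemma ga_mem_of_convex {s : Set ℝ} (hs : Convex ℝ s) {x y : ℝ} (hx : x ∈ s) (hy : y ∈ s)
    (β : Fin 2) : ga β x y ∈ s := by
  unfold ga
  split_ifs
  · simpa only [smul_eq_mul] using hs hx hy mu1_nonneg mu2_nonneg mu1_add_mu2
  · simpa only [smul_eq_mul] using
      hs hx hy mu2_nonneg mu1_nonneg ((add_comm _ _).trans mu1_add_mu2)

lemma ga_zero (a b : ℝ) : ga 0 a b = mu1 * a + mu2 * b := rfl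

lemma ga_one (a b : ℝ) : ga 1 a b = mu2 * a + mu1 * b := rfl

lemma sqrt_three_mul_ga_sub (a b : ℝ) : Real.sqrt 3 * (ga 1 a b - ga 0 a b) = b - a := by
  have h := Real.mul_self_sqrt (show (0 : ℝ) ≤ 3 by norm_num)
  rw [ga_zero, ga_one, mu1, mu2]
  linear_combination (b - a) / 3 * h

lemma cxmH_eq (c01 c11 : ℕ → ℕ → ℝ) (Δx : ℝ) (i j : ℕ) :
    cxmH c01 c11 Δx i j = (c11 i j - c01 i j) / Δx := by
  rw [cxmH, cmH, cmH, div_mul_eq_mul_div, sqrt_three_mul_ga_sub]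

lemma cxpH_eq (c00 c10 : ℕ → ℕ → ℝ) (Δx : ℝ) (i j : ℕ) :
    cxpH c00 c10 Δx i j = (c10 i (j + 1) - c00 i (j + 1)) / Δx := by
  rw [cxpH, cpH, cpH, div_mul_eq_mul_div, sqrt_three_mul_ga_sub]

/-- The Gauss-averaged numerical flux `∑_β w_β ({D₂₁c_x + D₂₂c_y} + (α̃/Δx)[c])` through the
horizontal edge `y_{j+1/2}` of column `i`. -/
def fluxH (D21m D21p D22m D22p : ℕ → ℕ → Fin 2 → ℝ) (c00 c10 c01 c11 : ℕ → ℕ → ℝ)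
    (αt Δx Δy : ℝ) (i j : ℕ) : ℝ :=
  ∑ β : Fin 2, (1 / 2 : ℝ) * (GyH D21m D21p D22m D22p c00 c10 c01 c11 Δx Δy i j β
    + (αt / Δx) * jumpH c00 c10 c01 c11 i j β)

/-- `4ΔxΔy` times the part of `fluxH` contributed by the cell above the edge: `a b` are its
corner values on the edge, `p q` the opposite ones, `s` the sum of the two `D₂₁` values and
`g₀ g₁` the Gauss-weighted `D₂₂` values. The cell below the edge contributes the same form,
reflected (`a b ↔ p q`, `s ↦ -s`) and with the opposite sign. -/
def sideFlux (Δx Δy αt s g₀ g₁ a b p q : ℝ) : ℝ :=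
  Δy * s * (b - a) + Δx * (g₀ * (p - a) + g₁ * (q - b)) + 2 * αt * Δy * (a + b)

def upperFlux (D21 D22 : ℕ → ℕ → Fin 2 → ℝ) (c00 c10 c01 c11 : ℕ → ℕ → ℝ) (αt Δx Δy : ℝ)
    (i j : ℕ) : ℝ :=
  sideFlux Δx Δy αt (D21 i j 0 + D21 i j 1) (ga 0 (D22 i j 0) (D22 i j 1))
    (ga 1 (D22 i j 0) (D22 i j 1)) (c00 i (j + 1)) (c10 i (j + 1)) (c01 i (j + 1)) (c11 i (j + 1))

def lowerFlux (D21 D22 : ℕ → ℕ → Fin 2 → ℝ) (c00 c10 c01 c11 : ℕ → ℕ → ℝ) (αt Δx Δy : ℝ)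
    (i j : ℕ) : ℝ :=
  sideFlux Δx Δy αt (-(D21 i j 0 + D21 i j 1)) (ga 0 (D22 i j 0) (D22 i j 1))
    (ga 1 (D22 i j 0) (D22 i j 1)) (c01 i j) (c11 i j) (c00 i j) (c10 i j)

lemma fluxH_eq {Δx Δy : ℝ} (hΔx : Δx ≠ 0) (hΔy : Δy ≠ 0)
    {D21m D21p D22m D22p : ℕ → ℕ → Fin 2 → ℝ} {c00 c10 c01 c11 : ℕ → ℕ → ℝ} {αt : ℝ}
    {i j : ℕ} (hj : 0 < j) :
    fluxH D21m D21p D22m D22p c00 c10 c01 c11 αt Δx Δy i j =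
      (upperFlux D21p D22p c00 c10 c01 c11 αt Δx Δy i j
        - lowerFlux D21m D22m c00 c10 c01 c11 αt Δx Δy i j) / (4 * Δx * Δy) := by
  simp only [fluxH, GyH, jumpH, cymH, cypH, cxmH_eq, cxpH_eq, cmH, cpH, Nat.sub_add_cancel hj,
    upperFlux, lowerFlux, sideFlux, Fin.sum_univ_two, ga_zero, ga_one, mu1, mu2]
  field_simp
  ring

lemma four_mul_Hdy {Δx Δy : ℝ} (hΔx : Δx ≠ 0) (hΔy : Δy ≠ 0) {Δt : ℝ}
    {D21m D21p D22m D22p : ℕ → ℕ → Fin 2 → ℝ} {Φ c00 c10 c01 c11 : ℕ → ℕ → ℝ} {αt : ℝ}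
    {i j : ℕ} (hj : 0 < j) :
    4 * Δx * Δy ^ 2 * Hdy D21m D21p D22m D22p Φ c00 c10 c01 c11 αt Δx Δy Δt i (j + 1) =
      Δt * lowerFlux D21m D22m c00 c10 c01 c11 αt Δx Δy i j
        + Δt * upperFlux D21p D22p c00 c10 c01 c11 αt Δx Δy i (j + 1)
        + (Δx * Δy ^ 2 * (c00 i (j + 1) * Φ (i - 1) j + c10 i (j + 1) * Φ i j
            + c01 i (j + 1) * Φ (i - 1) (j + 1) + c11 i (j + 1) * Φ i (j + 1)) / 6
          - Δt * (upperFlux D21p D22p c00 c10 c01 c11 αt Δx Δy i j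
            + lowerFlux D21m D22m c00 c10 c01 c11 αt Δx Δy i (j + 1))) := by
  have hflux : Hdy D21m D21p D22m D22p Φ c00 c10 c01 c11 αt Δx Δy Δt i (j + 1) =
      rbar Φ c00 c10 c01 c11 i (j + 1) / 6 - (Δt / Δy) *
        (fluxH D21m D21p D22m D22p c00 c10 c01 c11 αt Δx Δy i j
          - fluxH D21m D21p D22m D22p c00 c10 c01 c11 αt Δx Δy i (j + 1)) := by
    simp only [Hdy, fluxH, Nat.add_sub_cancel, Fin.sum_univ_two]
    ring
  rw [hflux, fluxH_eq hΔx hΔy hj, fluxH_eq hΔx hΔy j.succ_pos, rbar, Nat.add_sub_cancel]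
  field_simp
  ring

lemma abs_add_le_two_mul {x y M : ℝ} (hx : |x| ≤ M) (hy : |y| ≤ M) : |x + y| ≤ 2 * M :=
  (abs_add_le x y).trans (by linarith)

lemma penalty_dominates_diffusion {Δx Δy αt D21M D22M : ℝ} (hΔy : 0 < Δy) (hD21M : 0 ≤ D21M)
    (hαt : (Δx / (2 * Δy)) * D22M + Real.sqrt 3 * D21M ≤ αt) :
    Δx * D22M + 2 * Δy * D21M ≤ 2 * αt * Δy := by
  have h := mul_le_mul_of_nonneg_left hαt (by positivity : (0 : ℝ) ≤ 2 * Δy)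
  have : 1 ≤ Real.sqrt 3 := Real.one_le_sqrt.mpr (by norm_num)
  field_simp at h
  nlinarith [mul_nonneg (sub_nonneg.mpr this) (mul_nonneg hΔy.le hD21M)]

lemma cfl_mul_cell_size {Δx Δy Δt αt D21M D22M φ : ℝ} (hΔx : 0 < Δx) (hΔy : 0 < Δy)
    (hcfl : D22M * (Δt / Δy ^ 2) + 2 * (αt + D21M) * (Δt / (Δx * Δy)) < φ / 12) :
    Δt * (Δx * D22M + 2 * (αt + D21M) * Δy) < Δx * Δy ^ 2 * φ / 12 := by
  have h := mul_lt_mul_of_pos_left hcfl (by positivity : 0 < Δx * Δy ^ 2)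
  field_simp at h ⊢
  linarith

lemma sideFlux_nonneg {Δx Δy αt D21M D22M s g₀ g₁ a b p q : ℝ} (hΔx : 0 ≤ Δx) (hΔy : 0 ≤ Δy)
    (hs : |s| ≤ 2 * D21M) (hg₀ : g₀ ∈ Set.Icc 0 D22M) (hg₁ : g₁ ∈ Set.Icc 0 D22M)
    (hα : Δx * D22M + 2 * Δy * D21M ≤ 2 * αt * Δy)
    (ha : 0 ≤ a) (hb : 0 ≤ b) (hp : 0 ≤ p) (hq : 0 ≤ q) :
    0 ≤ sideFlux Δx Δy αt s g₀ g₁ a b p q := by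
  obtain ⟨hs₁, hs₂⟩ := abs_le.mp hs
  have hΔys₁ := mul_le_mul_of_nonneg_left hs₁ hΔy
  have hΔys₂ := mul_le_mul_of_nonneg_left hs₂ hΔy
  have hΔxg₀ := mul_le_mul_of_nonneg_left hg₀.2 hΔx
  have hΔxg₁ := mul_le_mul_of_nonneg_left hg₁.2 hΔx
  have hexpand : sideFlux Δx Δy αt s g₀ g₁ a b p q =
      (2 * αt * Δy - Δy * s - Δx * g₀) * a + (2 * αt * Δy + Δy * s - Δx * g₁) * b
        + Δx * g₀ * p + Δx * g₁ * q := by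
    unfold sideFlux; ring
  rw [hexpand]
  have := mul_nonneg hΔx hg₀.1
  have := mul_nonneg hΔx hg₁.1
  refine add_nonneg (add_nonneg (add_nonneg ?_ ?_) ?_) ?_ <;>
    apply mul_nonneg <;> first | assumption | linarith

lemma cfl_coeff_pos {Δx Δy Δt αt D21M D22M φ s t : ℝ} (hΔx : 0 ≤ Δx) (hΔy : 0 ≤ Δy)
    (hΔt : 0 ≤ Δt) (hαt : 0 ≤ αt) (hs : |s| ≤ 2 * D21M) (ht : |t| ≤ D22M)
    (hcfl : Δt * (Δx * D22M + 2 * (αt + D21M) * Δy) < Δx * Δy ^ 2 * φ / 12) :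
    0 < Δx * Δy ^ 2 * φ / 6 - Δt * (2 * αt * Δy + Δy * s + Δx * t) := by
  have hK : 0 ≤ Δx * D22M + 2 * (αt + D21M) * Δy := by
    have : 0 ≤ D21M := by linarith [(abs_nonneg s).trans hs]
    have : 0 ≤ D22M := (abs_nonneg t).trans ht
    positivity
  have hbound : Δt * (2 * αt * Δy + Δy * s + Δx * t)
      ≤ Δt * (Δx * D22M + 2 * (αt + D21M) * Δy) := by
    have := mul_le_mul_of_nonneg_left (le_abs_self s |>.trans hs) hΔy
    have := mul_le_mul_of_nonneg_left (le_abs_self t |>.trans ht) hΔx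
    exact mul_le_mul_of_nonneg_left (by linarith) hΔt
  linarith [mul_nonneg hΔt hK]

lemma own_part_pos {Δx Δy Δt αt D21M D22M s₁ s₂ g₀ g₁ h₀ h₁ a b p q φa φb φp φq : ℝ}
    (hΔx : 0 ≤ Δx) (hΔy : 0 ≤ Δy) (hΔt : 0 ≤ Δt) (hαt : 0 ≤ αt)
    (hs₁ : |s₁| ≤ 2 * D21M) (hs₂ : |s₂| ≤ 2 * D21M)
    (hg₀ : g₀ ∈ Set.Icc 0 D22M) (hg₁ : g₁ ∈ Set.Icc 0 D22M)
    (hh₀ : h₀ ∈ Set.Icc 0 D22M) (hh₁ : h₁ ∈ Set.Icc 0 D22M)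
    (ha : 0 < a) (hb : 0 < b) (hp : 0 < p) (hq : 0 < q)
    (hφa : Δt * (Δx * D22M + 2 * (αt + D21M) * Δy) < Δx * Δy ^ 2 * φa / 12)
    (hφb : Δt * (Δx * D22M + 2 * (αt + D21M) * Δy) < Δx * Δy ^ 2 * φb / 12)
    (hφp : Δt * (Δx * D22M + 2 * (αt + D21M) * Δy) < Δx * Δy ^ 2 * φp / 12)
    (hφq : Δt * (Δx * D22M + 2 * (αt + D21M) * Δy) < Δx * Δy ^ 2 * φq / 12) :
    0 < Δx * Δy ^ 2 * (a * φa + b * φb + p * φp + q * φq) / 6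
      - Δt * (sideFlux Δx Δy αt s₁ g₀ g₁ a b p q + sideFlux Δx Δy αt s₂ h₀ h₁ p q a b) := by
  have hexpand : Δx * Δy ^ 2 * (a * φa + b * φb + p * φp + q * φq) / 6
      - Δt * (sideFlux Δx Δy αt s₁ g₀ g₁ a b p q + sideFlux Δx Δy αt s₂ h₀ h₁ p q a b) =
        (Δx * Δy ^ 2 * φa / 6 - Δt * (2 * αt * Δy + Δy * -s₁ + Δx * (h₀ - g₀))) * a
      + (Δx * Δy ^ 2 * φb / 6 - Δt * (2 * αt * Δy + Δy * s₁ + Δx * (h₁ - g₁))) * b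
      + (Δx * Δy ^ 2 * φp / 6 - Δt * (2 * αt * Δy + Δy * -s₂ + Δx * (g₀ - h₀))) * p
      + (Δx * Δy ^ 2 * φq / 6 - Δt * (2 * αt * Δy + Δy * s₂ + Δx * (g₁ - h₁))) * q := by
    unfold sideFlux; ring
  rw [hexpand]
  have hs₁' : |-s₁| ≤ 2 * D21M := (abs_neg s₁).symm ▸ hs₁
  have hs₂' : |-s₂| ≤ 2 * D21M := (abs_neg s₂).symm ▸ hs₂
  have hca := cfl_coeff_pos hΔx hΔy hΔt hαt hs₁'
    (abs_sub_le_of_nonneg_of_le hh₀.1 hh₀.2 hg₀.1 hg₀.2) hφa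
  have hcb := cfl_coeff_pos hΔx hΔy hΔt hαt hs₁
    (abs_sub_le_of_nonneg_of_le hh₁.1 hh₁.2 hg₁.1 hg₁.2) hφb
  have hcp := cfl_coeff_pos hΔx hΔy hΔt hαt hs₂'
    (abs_sub_le_of_nonneg_of_le hg₀.1 hg₀.2 hh₀.1 hh₀.2) hφp
  have hcq := cfl_coeff_pos hΔx hΔy hΔt hαt hs₂
    (abs_sub_le_of_nonneg_of_le hg₁.1 hg₁.2 hh₁.1 hh₁.2) hφq
  exact add_pos (add_pos (add_pos (mul_pos hca ha) (mul_pos hcb hb)) (mul_pos hcp hp))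
    (mul_pos hcq hq)

theorem y_diffusion_part_positive_2d
    (Nx Ny : ℕ) (Δx Δy Δt : ℝ)
    (hΔx : 0 < Δx) (hΔy : 0 < Δy) (hΔt : 0 < Δt)
    (Φ c00 c10 c01 c11 : ℕ → ℕ → ℝ) (D21m D21p D22m D22p : ℕ → ℕ → Fin 2 → ℝ)
    (αt D22M D21M : ℝ)
    -- all corner concentration values of all cells strictly positive
    (hc : ∀ i j, 1 ≤ i → i ≤ Nx → 1 ≤ j → j ≤ Ny →
      0 < c00 i j ∧ 0 < c10 i j ∧ 0 < c01 i j ∧ 0 < c11 i j)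
    -- all D₂₂ values lie in [0, D₂₂^M], all |D₂₁| values are at most D₂₁^M
    (hD22 : ∀ i j, 1 ≤ i → i ≤ Nx → 1 ≤ j → j ≤ Ny - 1 → ∀ β : Fin 2,
      (0 ≤ D22m i j β ∧ D22m i j β ≤ D22M) ∧ (0 ≤ D22p i j β ∧ D22p i j β ≤ D22M))
    (hD21 : ∀ i j, 1 ≤ i → i ≤ Nx → 1 ≤ j → j ≤ Ny - 1 → ∀ β : Fin 2,
      |D21m i j β| ≤ D21M ∧ |D21p i j β| ≤ D21M)
    -- α̃ > 0 and α̃ ≥ (Δx/(2Δy))·D₂₂^M + √3·D₂₁^M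
    (hαt0 : 0 < αt)
    (hαt : (Δx / (2 * Δy)) * D22M + Real.sqrt 3 * D21M ≤ αt)
    -- D₂₂^M·Λ₂ + 2(α̃ + D₂₁^M)·λ < Φ_m/12, Φ_m the minimum of Φ over all mesh corners
    (hCFL : ∀ i j, i ≤ Nx → j ≤ Ny →
      D22M * (Δt / Δy ^ 2) + 2 * (αt + D21M) * (Δt / (Δx * Δy)) < Φ i j / 12) :
    ∀ i j, 2 ≤ i → i ≤ Nx - 1 → 2 ≤ j → j ≤ Ny - 1 →
      0 < Hdy D21m D21p D22m D22p Φ c00 c10 c01 c11 αt Δx Δy Δt i j := by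
  intro i j hi hiN hj hjN
  obtain ⟨m, rfl⟩ : ∃ m, j = m + 1 := ⟨j - 1, by omega⟩
  have hS (k : ℕ) (hk : 1 ≤ k) (hkN : k ≤ Ny - 1) :
      |D21m i k 0 + D21m i k 1| ≤ 2 * D21M ∧ |D21p i k 0 + D21p i k 1| ≤ 2 * D21M := by
    have h := hD21 i k (by omega) (by omega) hk hkN
    exact ⟨abs_add_le_two_mul (h 0).1 (h 1).1, abs_add_le_two_mul (h 0).2 (h 1).2⟩
  have hG (k : ℕ) (hk : 1 ≤ k) (hkN : k ≤ Ny - 1) (β : Fin 2) :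
      ga β (D22m i k 0) (D22m i k 1) ∈ Set.Icc 0 D22M ∧
        ga β (D22p i k 0) (D22p i k 1) ∈ Set.Icc 0 D22M := by
    have h := hD22 i k (by omega) (by omega) hk hkN
    exact ⟨ga_mem_of_convex (convex_Icc 0 D22M) (h 0).1 (h 1).1 β,
      ga_mem_of_convex (convex_Icc 0 D22M) (h 0).2 (h 1).2 β⟩
  obtain ⟨hsm₀, hsp₀⟩ := hS m (by omega) (by omega)
  obtain ⟨hsm₁, hsp₁⟩ := hS (m + 1) (by omega) hjN
  have hD21M : 0 ≤ D21M := by linarith [(abs_nonneg _).trans hsm₀]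
  have hα := penalty_dominates_diffusion hΔy hD21M hαt
  have hcfl (k l : ℕ) (hk : k ≤ Nx) (hl : l ≤ Ny) := cfl_mul_cell_size hΔx hΔy (hCFL k l hk hl)
  have hg₀ := hG m (by omega) (by omega)
  have hg₁ := hG (m + 1) (by omega) hjN
  obtain ⟨hl₀, hl₁, hl₂, hl₃⟩ := hc i m (by omega) (by omega) (by omega) (by omega)
  obtain ⟨ho₀, ho₁, ho₂, ho₃⟩ := hc i (m + 1) (by omega) (by omega) (by omega) (by omega)
  obtain ⟨hu₀, hu₁, hu₂, hu₃⟩ := hc i (m + 2) (by omega) (by omega) (by omega) (by omega)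
  refine pos_of_mul_pos_right (a := 4 * Δx * Δy ^ 2) ?_ (by positivity)
  rw [four_mul_Hdy hΔx.ne' hΔy.ne' (show 0 < m by omega)]
  refine add_pos_of_nonneg_of_pos (add_nonneg (mul_nonneg hΔt.le ?_) (mul_nonneg hΔt.le ?_)) ?_
  · exact sideFlux_nonneg hΔx.le hΔy.le (by rwa [abs_neg]) (hg₀ 0).1 (hg₀ 1).1 hα
      hl₂.le hl₃.le hl₀.le hl₁.le
  · exact sideFlux_nonneg hΔx.le hΔy.le hsp₁ (hg₁ 0).2 (hg₁ 1).2 hα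
      hu₀.le hu₁.le hu₂.le hu₃.le
  · exact own_part_pos hΔx.le hΔy.le hΔt.le hαt0.le hsp₀ (by rwa [abs_neg])
      (hg₀ 0).2 (hg₀ 1).2 (hg₁ 0).1 (hg₁ 1).1 ho₀ ho₁ ho₂ ho₃
      (hcfl _ _ (by omega) (by omega)) (hcfl _ _ (by omega) (by omega))
      (hcfl _ _ (by omega) (by omega)) (hcfl _ _ (by omega) (by omega))

end DG2D
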